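/- Let 𝔛=(X,{R_i}_{i=0}^d) be a commutative association scheme generated by a non-symmetric relation R_1 satisfying R_1^2 ⊆ {R_1,R_{1*},R_2}, R_1R_{1*} ⊆ {R_0,R_1,R_{1*},R_2,R_{2*}}, and 2 ∉ {1*,2*}, with k_1 = k_2 > 1, and set I := {i : R_i ∈ R_1^2}. If |I| = 2, then I = {1*,2}; that is, the cases I = {1,1*} and I = {1,2} are impossible. -/

import Mathlib

/-- A `d`-class association scheme on a finite set `X`, with relations
`R 0, …, R d`, transposition map `star` (so that `Rᵢᵀ = R (star i)`) and
intersection numbers `p i j l = |Rᵢ(x) ∩ R_{j*}(y)|` for `(x,y) ∈ R l`. -/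
structure AssocScheme (X : Type*) [Fintype X] (d : ℕ) where
  R : Fin (d + 1) → X → X → Prop
  star : Fin (d + 1) → Fin (d + 1)
  p : Fin (d + 1) → Fin (d + 1) → Fin (d + 1) → ℕ
  R_nonempty : ∀ i, ∃ x y, R i x y
  R_diag : ∀ x y, R 0 x y ↔ x = y
  R_partition : ∀ x y, ∃! i, R i x y
  R_star : ∀ i x y, R i x y ↔ R (star i) y x
  p_count : ∀ i j l x y, R l x y →
    p i j l = Set.ncard {z | R i x z ∧ R (star j) y z}

namespace AssocScheme

variable {X : Type*} [Fintype X] {d : ℕ}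

/-- The valency `kᵢ = p_{i,i*}^0` of the relation `Rᵢ`. -/
def valency (A : AssocScheme X d) (i : Fin (d + 1)) : ℕ := A.p i (A.star i) 0

/-- A scheme is commutative if `p_{i,j}^l = p_{j,i}^l` for all `i,j,l`. -/
def IsCommutative (A : AssocScheme X d) : Prop := ∀ i j l, A.p i j l = A.p j i l

/-- The index set of the complex product `Rᵢ Rⱼ`, i.e. `{l | p_{i,j}^l ≠ 0}`. -/
def prodIdx (A : AssocScheme X d) (i j : Fin (d + 1)) : Set (Fin (d + 1)) :=
  {l | A.p i j l ≠ 0}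

/-- A set of relations (given by its index set) is closed if it is closed
under `R_{i*} R_j`. -/
def IsClosed (A : AssocScheme X d) (F : Set (Fin (d + 1))) : Prop :=
  ∀ i ∈ F, ∀ j ∈ F, ∀ l, A.p (A.star i) j l ≠ 0 → l ∈ F

/-- `Rⱼ` generates the scheme if the smallest closed subset containing `Rⱼ`
consists of all relations. -/
def Generates (A : AssocScheme X d) (j : Fin (d + 1)) : Prop :=
  ∀ F : Set (Fin (d + 1)), A.IsClosed F → j ∈ F → F = Set.univ

end AssocScheme

/-!
Write `a = p₁₁¹`, `b = p₁₁^{1*}`, `c = p₁₁²`, `γ = p_{1,1*}²` and `k = k₁`. Counting paths of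
length two out of a fixed point gives `a + b + c = k`, `k = 1 + 2a + 2γ` and, using
commutativity, `a² + b² + c² = k + 2a² + 2γ²`. If `a = 0` the claim follows from `|I| = 2`.
Otherwise `|I| = 2` forces `bc = 0`, and then the three equations force `γ = 0`, i.e.
`R₁R_{1*} ⊆ {R₀, R₁, R_{1*}}`. If `c = 0`, the set `{R₀, R₁, R_{1*}}` is closed, contradicting
that `R₁` generates. If `b = 0`, `R₁` restricted to `R₁(x)` is a transitive tournament and so has
a source, whereas `a ≠ 0` gives every point of `R₁(x)` an in-neighbour inside `R₁(x)`.
-/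

namespace AssocScheme

open Finset
open scoped Classical

variable {X : Type*} [Fintype X] {d : ℕ} (A : AssocScheme X d)

lemma eq_of_R {l m : Fin (d + 1)} {x y : X} (hl : A.R l x y) (hm : A.R m x y) : l = m :=
  (A.R_partition x y).unique hl hm

@[simp]
lemma star_star (i : Fin (d + 1)) : A.star (A.star i) = i := by
  obtain ⟨x, y, h⟩ := A.R_nonempty i
  exact A.eq_of_R (by rwa [← A.R_star, ← A.R_star]) h

@[simp]
lemma star_zero : A.star 0 = 0 := by
  obtain ⟨x, -⟩ := A.R_nonempty 0
  have hx : A.R 0 x x := (A.R_diag x x).2 rfl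
  exact A.eq_of_R ((A.R_star 0 x x).1 hx) hx

lemma star_injective : Function.Injective A.star :=
  Function.LeftInverse.injective A.star_star

lemma ne_zero_of_star_ne {i : Fin (d + 1)} (hi : A.star i ≠ i) : i ≠ 0 := by
  rintro rfl
  exact hi A.star_zero

lemma ne_of_R {i : Fin (d + 1)} (hi : i ≠ 0) {x y : X} (h : A.R i x y) : x ≠ y := by
  rintro rfl
  exact hi (A.eq_of_R h ((A.R_diag x x).2 rfl))

noncomputable def rel (x y : X) : Fin (d + 1) := (A.R_partition x y).exists.choose

lemma R_rel (x y : X) : A.R (A.rel x y) x y := (A.R_partition x y).exists.choose_spec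

lemma rel_eq_iff {l : Fin (d + 1)} {x y : X} : A.rel x y = l ↔ A.R l x y :=
  ⟨fun h => h ▸ A.R_rel x y, fun h => A.eq_of_R (A.R_rel x y) h⟩

noncomputable def nbhd (i : Fin (d + 1)) (x : X) : Finset X := {y | A.R i x y}

lemma mem_nbhd {i : Fin (d + 1)} {x y : X} : y ∈ A.nbhd i x ↔ A.R i x y := by
  simp [nbhd]

lemma p_eq_card {l : Fin (d + 1)} {x y : X} (h : A.R l x y) (i j : Fin (d + 1)) :
    A.p i j l = #{z ∈ A.nbhd i x | A.R j z y} := by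
  rw [A.p_count i j l x y h, ← Set.ncard_coe_finset]
  congr 1
  ext z
  simp [mem_nbhd, ← A.R_star]

lemma p_ne_zero_iff {l : Fin (d + 1)} {x y : X} (h : A.R l x y) (i j : Fin (d + 1)) :
    A.p i j l ≠ 0 ↔ ∃ z, A.R i x z ∧ A.R j z y := by
  simp [A.p_eq_card h, mem_nbhd]

lemma card_nbhd (i : Fin (d + 1)) (x : X) : #(A.nbhd i x) = A.valency i := by
  have hx : A.R 0 x x := (A.R_diag x x).2 rfl
  rw [valency, A.p_eq_card hx]
  congr 1
  ext z
  simp [mem_nbhd, ← A.R_star]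

lemma sum_comp_rel (x : X) (s : Finset X) (f : Fin (d + 1) → ℕ) :
    ∑ y ∈ s, f (A.rel x y) = ∑ l, #{y ∈ s | A.R l x y} * f l := by
  rw [← sum_fiberwise s (A.rel x)]
  refine sum_congr rfl fun l _ => ?_
  simp_rw [A.rel_eq_iff]
  rw [sum_congr rfl fun y hy => by rw [A.rel_eq_iff.2 (mem_filter.1 hy).2],
    sum_const, smul_eq_mul]

lemma sum_valency_mul_eq_sum_rel (x : X) (f : Fin (d + 1) → ℕ) :
    ∑ l, A.valency l * f l = ∑ y, f (A.rel x y) := by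
  rw [A.sum_comp_rel]
  exact sum_congr rfl fun l _ => by rw [← A.card_nbhd l x]; rfl

lemma sum_valency_mul_p (i j : Fin (d + 1)) :
    ∑ l, A.valency l * A.p i j l = A.valency i * A.valency j := by
  obtain ⟨x, -⟩ := A.R_nonempty 0
  have key := sum_card_bipartiteAbove_eq_sum_card_bipartiteBelow (fun y z => A.R j z y)
    (s := univ) (t := A.nbhd i x)
  have below : ∀ z, #(bipartiteBelow (fun y z => A.R j z y) univ z) = A.valency j :=
    A.card_nbhd j
  rw [sum_congr rfl fun z _ => below z, sum_const, card_nbhd, smul_eq_mul] at key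
  rw [A.sum_valency_mul_eq_sum_rel x, ← key]
  exact sum_congr rfl fun y _ => A.p_eq_card (A.R_rel x y) i j

lemma p_eq_p_star (i j l : Fin (d + 1)) :
    A.p i j l = A.p (A.star j) (A.star i) (A.star l) := by
  obtain ⟨x, y, h⟩ := A.R_nonempty l
  rw [A.p_count i j l x y h, A.p_count _ _ _ y x ((A.R_star l x y).1 h), star_star]
  simp_rw [and_comm]

lemma valency_star (i : Fin (d + 1)) : A.valency (A.star i) = A.valency i := by
  have key := sum_card_bipartiteAbove_eq_sum_card_bipartiteBelow (A.R i)
    (s := (univ : Finset X)) (t := univ)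
  have below : ∀ y : X, #(bipartiteBelow (A.R i) univ y) = A.valency (A.star i) := by
    intro y
    rw [← A.card_nbhd _ y]
    congr 1
    ext x
    simp [bipartiteBelow, mem_nbhd, ← A.R_star]
  have above : ∀ x : X, #(bipartiteAbove (A.R i) univ x) = A.valency i := A.card_nbhd i
  rw [sum_congr rfl fun x _ => above x, sum_congr rfl fun y _ => below y, sum_const,
    sum_const] at key
  obtain ⟨x, -⟩ := A.R_nonempty 0
  exact (Nat.eq_of_mul_eq_mul_left (card_pos.2 ⟨x, mem_univ x⟩) key).symm

lemma valency_mul_p_eq_valency_mul_p (i j l : Fin (d + 1)) :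
    A.valency i * A.p j (A.star l) i = A.valency j * A.p i l j := by
  obtain ⟨x, -⟩ := A.R_nonempty 0
  have key := sum_card_bipartiteAbove_eq_sum_card_bipartiteBelow (A.R l)
    (s := A.nbhd i x) (t := A.nbhd j x)
  have above : ∀ z ∈ A.nbhd i x,
      #(bipartiteAbove (A.R l) (A.nbhd j x) z) = A.p j (A.star l) i := by
    intro z hz
    rw [A.p_eq_card (A.mem_nbhd.1 hz)]
    simp [bipartiteAbove, ← A.R_star]
  have below : ∀ w ∈ A.nbhd j x, #(bipartiteBelow (A.R l) (A.nbhd i x) w) = A.p i l j :=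
    fun w hw => (A.p_eq_card (A.mem_nbhd.1 hw) i l).symm
  rwa [sum_congr rfl above, sum_congr rfl below, sum_const, sum_const, card_nbhd, card_nbhd,
    smul_eq_mul, smul_eq_mul] at key

lemma sum_valency_mul_p_sq (i j : Fin (d + 1)) :
    ∑ l, A.valency l * A.p i j l ^ 2
      = ∑ m, A.valency m * (A.p (A.star i) i m * A.p j (A.star j) m) := by
  obtain ⟨x, -⟩ := A.R_nonempty 0
  set N := A.nbhd i x
  have pairs : ∀ y : X, A.p i j (A.rel x y) ^ 2
      = #{q ∈ N ×ˢ N | A.R j q.1 y ∧ A.R j q.2 y} := by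
    intro y
    rw [filter_product (A.R j · y) (A.R j · y), card_product, ← sq,
      A.p_eq_card (A.R_rel x y)]
  have common : ∀ q : X × X, #{y | A.R j q.1 y ∧ A.R j q.2 y}
      = A.p j (A.star j) (A.rel q.1 q.2) := by
    intro q
    rw [A.p_eq_card (A.R_rel q.1 q.2)]
    congr 1
    ext y
    simp [mem_nbhd, ← A.R_star]
  have fiber : ∀ z ∈ N, ∀ m, #{w ∈ N | A.R m z w} = A.p m (A.star i) (A.star i) := by
    intro z hz m
    rw [A.p_eq_card ((A.R_star i x z).1 (A.mem_nbhd.1 hz))]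
    congr 1
    ext w
    simp only [N, mem_filter, mem_nbhd, ← A.R_star]
    tauto
  calc ∑ l, A.valency l * A.p i j l ^ 2
      = ∑ y, #{q ∈ N ×ˢ N | A.R j q.1 y ∧ A.R j q.2 y} := by
        rw [A.sum_valency_mul_eq_sum_rel x (fun l => A.p i j l ^ 2)]
        exact sum_congr rfl fun y _ => pairs y
    _ = ∑ q ∈ N ×ˢ N, A.p j (A.star j) (A.rel q.1 q.2) := by
        exact (sum_card_bipartiteAbove_eq_sum_card_bipartiteBelow
          (fun y (q : X × X) => A.R j q.1 y ∧ A.R j q.2 y)).trans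
          (sum_congr rfl fun q _ => common q)
    _ = ∑ z ∈ N, ∑ m, A.p m (A.star i) (A.star i) * A.p j (A.star j) m := by
        rw [sum_product]
        refine sum_congr rfl fun z hz => ?_
        rw [A.sum_comp_rel z N]
        exact sum_congr rfl fun m _ => by rw [fiber z hz m]
    _ = ∑ m, A.valency m * (A.p (A.star i) i m * A.p j (A.star j) m) := by
        rw [sum_const, A.card_nbhd, smul_eq_mul, mul_sum, ← A.valency_star]
        refine sum_congr rfl fun m _ => ?_
        rw [← mul_assoc, A.valency_mul_p_eq_valency_mul_p, mul_assoc]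

lemma valency_pos (i : Fin (d + 1)) : 0 < A.valency i := by
  obtain ⟨x, y, h⟩ := A.R_nonempty i
  rw [← A.card_nbhd i x]
  exact card_pos.2 ⟨y, A.mem_nbhd.2 h⟩

lemma valency_zero : A.valency 0 = 1 := by
  obtain ⟨x, -⟩ := A.R_nonempty 0
  rw [← A.card_nbhd 0 x, card_eq_one]
  exact ⟨x, by ext y; simp [mem_nbhd, A.R_diag, eq_comm]⟩

lemma p_self_star_self (i : Fin (d + 1)) : A.p i (A.star i) i = A.p i i i := by
  have h := A.valency_mul_p_eq_valency_mul_p i i (A.star i)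
  rw [star_star] at h
  exact (Nat.eq_of_mul_eq_mul_left (A.valency_pos i) h).symm

lemma p_self_star_star (i l : Fin (d + 1)) :
    A.p i (A.star i) (A.star l) = A.p i (A.star i) l := by
  rw [A.p_eq_p_star i (A.star i) l, star_star]

lemma mem_prodIdx_star {i j l : Fin (d + 1)} :
    l ∈ A.prodIdx i j ↔ A.star l ∈ A.prodIdx (A.star j) (A.star i) := by
  simp only [prodIdx, Set.mem_ofPred_eq, ← A.p_eq_p_star]

lemma eq_of_mem_prodIdx_zero_left {j l : Fin (d + 1)} (h : l ∈ A.prodIdx 0 j) : l = j := by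
  obtain ⟨x, y, hl⟩ := A.R_nonempty l
  obtain ⟨z, hxz, hzy⟩ := (A.p_ne_zero_iff hl 0 j).1 h
  rw [(A.R_diag x z).1 hxz] at hl
  exact A.eq_of_R hl hzy

lemma eq_of_mem_prodIdx_zero_right {i l : Fin (d + 1)} (h : l ∈ A.prodIdx i 0) : l = i := by
  obtain ⟨x, y, hl⟩ := A.R_nonempty l
  obtain ⟨z, hxz, hzy⟩ := (A.p_ne_zero_iff hl i 0).1 h
  rw [← (A.R_diag z y).1 hzy] at hl
  exact A.eq_of_R hl hxz

lemma sum_eq_sum_of_prodIdx_subset {i j : Fin (d + 1)} {s : Finset (Fin (d + 1))}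
    (h : A.prodIdx i j ⊆ s) (g : Fin (d + 1) → ℕ → ℕ) (hg : ∀ l, g l 0 = 0) :
    ∑ l, g l (A.p i j l) = ∑ l ∈ s, g l (A.p i j l) := by
  refine (sum_subset (subset_univ s) fun l _ hl => ?_).symm
  rw [show A.p i j l = 0 from not_not.1 fun hp => hl (h hp), hg]

section SquareConditions

variable {i j : Fin (d + 1)}

lemma sum_valency_mul_comp_p_self_self (hi : A.star i ≠ i) (hji : j ≠ i) (hjs : j ≠ A.star i)
    (hk : A.valency j = A.valency i) (hsq : A.prodIdx i i ⊆ {i, A.star i, j})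
    (f : ℕ → ℕ) (hf : f 0 = 0) :
    ∑ l, A.valency l * f (A.p i i l)
      = A.valency i * (f (A.p i i i) + f (A.p i i (A.star i)) + f (A.p i i j)) := by
  rw [A.sum_eq_sum_of_prodIdx_subset (s := {i, A.star i, j}) (by simpa using hsq)
    (fun l n => A.valency l * f n) (by simp [hf])]
  rw [sum_insert (by simp [hi.symm, hji.symm]), sum_insert (by simpa using hjs.symm),
    sum_singleton, valency_star, hk]
  ring

lemma sum_valency_mul_comp_p_self_star (hi : A.star i ≠ i) (hji : j ≠ i) (hjs : j ≠ A.star i)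
    (hj : A.star j ≠ j) (hk : A.valency j = A.valency i)
    (hout : A.prodIdx i (A.star i) ⊆ {0, i, A.star i, j, A.star j}) (f : ℕ → ℕ) (hf : f 0 = 0) :
    ∑ l, A.valency l * f (A.p i (A.star i) l)
      = f (A.valency i) + 2 * A.valency i * (f (A.p i i i) + f (A.p i (A.star i) j)) := by
  have hi0 := A.ne_zero_of_star_ne hi
  have hj0 := A.ne_zero_of_star_ne hj
  have hsi : A.star i ≠ 0 := fun h => hi0 (by simpa using congrArg A.star h)
  have hsj : A.star j ≠ 0 := fun h => hj0 (by simpa using congrArg A.star h)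
  have hjsi : A.star j ≠ i := fun h => hjs (by simpa using congrArg A.star h)
  have hjss : A.star j ≠ A.star i := fun h => hji (A.star_injective h)
  rw [A.sum_eq_sum_of_prodIdx_subset (s := {0, i, A.star i, j, A.star j}) (by simpa using hout)
    (fun l n => A.valency l * f n) (by simp [hf])]
  rw [sum_insert (by simp [hi0.symm, hsi.symm, hj0.symm, hsj.symm]),
    sum_insert (by simp [hi.symm, hji.symm, hjsi.symm]),
    sum_insert (by simp [hjs.symm, hjss.symm]), sum_insert (by simpa using hj.symm), sum_singleton]
  rw [valency_zero, one_mul, show A.p i (A.star i) 0 = A.valency i from rfl]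
  simp only [valency_star, hk, p_self_star_self, p_self_star_star]
  ring

lemma p_self_add_p_self_add_p_self_eq_valency (hi : A.star i ≠ i) (hji : j ≠ i)
    (hjs : j ≠ A.star i) (hk : A.valency j = A.valency i)
    (hsq : A.prodIdx i i ⊆ {i, A.star i, j}) :
    A.p i i i + A.p i i (A.star i) + A.p i i j = A.valency i := by
  have h := A.sum_valency_mul_comp_p_self_self hi hji hjs hk hsq id rfl
  simp only [id, A.sum_valency_mul_p] at h
  exact (Nat.eq_of_mul_eq_mul_left (A.valency_pos i) h).symm

lemma valency_eq_one_add_two_mul_p_add_two_mul_p (hi : A.star i ≠ i) (hji : j ≠ i)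
    (hjs : j ≠ A.star i) (hj : A.star j ≠ j) (hk : A.valency j = A.valency i)
    (hout : A.prodIdx i (A.star i) ⊆ {0, i, A.star i, j, A.star j}) :
    A.valency i = 1 + 2 * A.p i i i + 2 * A.p i (A.star i) j := by
  have h := A.sum_valency_mul_comp_p_self_star hi hji hjs hj hk hout id rfl
  simp only [id, A.sum_valency_mul_p, valency_star] at h
  refine Nat.eq_of_mul_eq_mul_left (A.valency_pos i) ?_
  linarith

lemma sq_add_sq_add_sq_p_self_eq (hcomm : A.IsCommutative) (hi : A.star i ≠ i) (hji : j ≠ i)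
    (hjs : j ≠ A.star i) (hj : A.star j ≠ j) (hk : A.valency j = A.valency i)
    (hsq : A.prodIdx i i ⊆ {i, A.star i, j})
    (hout : A.prodIdx i (A.star i) ⊆ {0, i, A.star i, j, A.star j}) :
    A.p i i i ^ 2 + A.p i i (A.star i) ^ 2 + A.p i i j ^ 2
      = A.valency i + 2 * A.p i i i ^ 2 + 2 * A.p i (A.star i) j ^ 2 := by
  have h := A.sum_valency_mul_p_sq i i
  simp_rw [hcomm (A.star i) i, ← sq] at h
  rw [A.sum_valency_mul_comp_p_self_self hi hji hjs hk hsq (· ^ 2) rfl,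
    A.sum_valency_mul_comp_p_self_star hi hji hjs hj hk hout (· ^ 2) rfl] at h
  refine Nat.eq_of_mul_eq_mul_left (A.valency_pos i) ?_
  linarith

end SquareConditions

lemma isClosed_zero_self_star {i : Fin (d + 1)} (hsq : A.prodIdx i i ⊆ {i, A.star i})
    (hin : A.prodIdx (A.star i) i ⊆ {0, i, A.star i})
    (hout : A.prodIdx i (A.star i) ⊆ {0, i, A.star i}) : A.IsClosed {0, i, A.star i} := by
  intro a ha b hb l hl
  change l ∈ A.prodIdx (A.star a) b at hl
  simp only [Set.mem_insert_iff, Set.mem_singleton_iff] at ha hb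
  rcases ha with rfl | rfl | rfl
  · rw [star_zero] at hl
    rw [A.eq_of_mem_prodIdx_zero_left hl]
    simpa using hb
  · rcases hb with rfl | rfl | rfl
    · simp [A.eq_of_mem_prodIdx_zero_right hl]
    · exact hin hl
    · rcases hsq (by simpa using A.mem_prodIdx_star.1 hl) with h | h
      · simp [← h]
      · simp [A.star_injective h]
  · rw [star_star] at hl
    rcases hb with rfl | rfl | rfl
    · simp [A.eq_of_mem_prodIdx_zero_right hl]
    · exact Set.subset_insert _ _ (hsq hl)
    · exact hout hl

lemma p_self_self_self_eq_zero_of_p_self_self_star_eq_zero {i : Fin (d + 1)}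
    (hi : A.star i ≠ i) (hin : A.prodIdx (A.star i) i ⊆ {0, i, A.star i})
    (hb : A.p i i (A.star i) = 0) : A.p i i i = 0 := by
  by_contra ha
  obtain ⟨s, t, hst⟩ := A.R_nonempty i
  have irrefl : ∀ u, ¬ A.R i u u := fun u h => A.ne_of_R (A.ne_zero_of_star_ne hi) h rfl
  -- Distinct points of `Rᵢ(s)` are related by `Rᵢ` one way or the other, and the way back
  -- would close a triangle counted by `p i i i* = 0`.
  have trans : ∀ u v w, A.R i s u → A.R i s w → A.R i u v → A.R i v w → A.R i u w := by
    intro u v w hsu hsw huv hvw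
    have huw : u ≠ w := by
      rintro rfl
      exact hi (A.eq_of_R ((A.R_star i v u).1 hvw) huv)
    rcases hin ((A.p_ne_zero_iff (A.R_rel u w) _ _).2 ⟨s, (A.R_star i s u).1 hsu, hsw⟩)
      with h | h | h <;> have hR := A.R_rel u w <;> rw [h] at hR
    · exact absurd ((A.R_diag u w).1 hR) huw
    · exact hR
    · exact absurd ((A.p_ne_zero_iff hR i i).2 ⟨v, huv, hvw⟩) (by simpa using hb)
  let r : {u // A.R i s u} → {u // A.R i s u} → Prop := fun u v => A.R i u v
  have : IsTrans _ r := ⟨fun u v w => trans u v w u.2 w.2⟩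
  have : Std.Irrefl r := ⟨fun u => irrefl u⟩
  obtain ⟨m, -, hm⟩ :=
    (Finite.wellFounded_of_trans_of_irrefl r).has_min Set.univ ⟨⟨t, hst⟩, trivial⟩
  obtain ⟨z, hsz, hzm⟩ := (A.p_ne_zero_iff m.2 i i).1 ha
  exact hm ⟨z, hsz⟩ trivial hzm

end AssocScheme

theorem sq_two_relations_determined_general
    {X : Type*} [Fintype X] {d : ℕ} (A : AssocScheme X d)
    (hd : 2 ≤ d)
    (hcomm : A.IsCommutative)
    (hgen : A.Generates 1)
    (hns : A.star 1 ≠ 1)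
    (h1a : A.prodIdx 1 1 ⊆ {1, A.star 1, 2})
    (h1b : A.prodIdx 1 (A.star 1) ⊆ {0, 1, A.star 1, 2, A.star 2})
    (h1c : (2 : Fin (d + 1)) ≠ A.star 1 ∧ (2 : Fin (d + 1)) ≠ A.star 2)
    (hk : A.valency 1 = A.valency 2)
    (hI : (A.prodIdx 1 1).ncard = 2) :
    A.prodIdx 1 1 = {A.star 1, 2} := by
  have h21 : (2 : Fin (d + 1)) ≠ 1 := by
    simp [Fin.ext_iff, Nat.mod_eq_of_lt, show 2 < d + 1 by omega, show 1 < d + 1 by omega]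
  have h22 := h1c.2.symm
  have e1 := A.p_self_add_p_self_add_p_self_eq_valency hns h21 h1c.1 hk.symm h1a
  have e2 := A.valency_eq_one_add_two_mul_p_add_two_mul_p hns h21 h1c.1 h22 hk.symm h1b
  have e3 := A.sq_add_sq_add_sq_p_self_eq hcomm hns h21 h1c.1 h22 hk.symm h1a h1b
  by_cases ha : A.p 1 1 1 = 0
  · refine Set.eq_of_subset_of_ncard_le (fun l hl => ?_) (by rw [hI, Set.ncard_pair h1c.1.symm])
    rcases h1a hl with rfl | h | h
    exacts [absurd ha hl, Or.inl h, Or.inr h]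
  exfalso
  have hbc : A.p 1 1 (A.star 1) = 0 ∨ A.p 1 1 2 = 0 := by
    by_contra! h
    have : A.prodIdx 1 1 = {1, A.star 1, 2} :=
      h1a.antisymm <| Set.insert_subset_iff.2
        ⟨ha, Set.insert_subset_iff.2 ⟨h.1, Set.singleton_subset_iff.2 h.2⟩⟩
    rw [this, Set.ncard_eq_three.2 ⟨_, _, _, hns.symm, h21.symm, h1c.1.symm, rfl⟩] at hI
    omega
  -- Substituting `e2` into `e1`, squaring and comparing with `e3` leaves `2γ(γ + 1 + 2a) = 0`.
  have hγ : A.p 1 (A.star 1) 2 = 0 := by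
    rcases hbc with h | h <;> rw [h] at e1 e3 <;> nlinarith
  have hout : A.prodIdx 1 (A.star 1) ⊆ {0, 1, A.star 1} := fun l hl => by
    rcases h1b hl with h | h | h | rfl | rfl
    exacts [Or.inl h, Or.inr (Or.inl h), Or.inr (Or.inr h), absurd hγ hl,
      absurd ((A.p_self_star_star 1 2).trans hγ) hl]
  have hin : A.prodIdx (A.star 1) 1 ⊆ {0, 1, A.star 1} := fun l hl =>
    hout (show A.p 1 (A.star 1) l ≠ 0 by rw [hcomm]; exact hl)
  rcases hbc with hb | hc
  · exact ha (A.p_self_self_self_eq_zero_of_p_self_self_star_eq_zero hns hin hb)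
  · have hsq : A.prodIdx 1 1 ⊆ {1, A.star 1} := fun l hl => by
      rcases h1a hl with h | h | rfl
      exacts [Or.inl h, Or.inr h, absurd hc hl]
    have h2 : (2 : Fin (d + 1)) ∈ ({0, 1, A.star 1} : Set _) := by
      rw [hgen _ (A.isClosed_zero_self_star hsq hin hout) (by simp)]
      trivial
    simp [A.ne_zero_of_star_ne h22, h21, h1c.1] at h2

theorem sq_two_relations_determined
    {X : Type*} [Fintype X] {d : ℕ} (A : AssocScheme X d)
    (hd : 2 ≤ d)
    (hcomm : A.IsCommutative)
    (hgen : A.Generates 1)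
    (hns : A.star 1 ≠ 1)
    (h1a : A.prodIdx 1 1 ⊆ {1, A.star 1, 2})
    (h1b : A.prodIdx 1 (A.star 1) ⊆ {0, 1, A.star 1, 2, A.star 2})
    (h1c : (2 : Fin (d + 1)) ≠ A.star 1 ∧ (2 : Fin (d + 1)) ≠ A.star 2)
    (hk : A.valency 1 = A.valency 2)
    (hk1 : 1 < A.valency 1)
    (hI : (A.prodIdx 1 1).ncard = 2) :
    A.prodIdx 1 1 = {A.star 1, 2} :=
  sq_two_relations_determined_general A hd hcomm hgen hns h1a h1b h1c hk hI
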